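/- Let X be a compact Riemann surface of genus g ≥ 1, and let D be an effective divisor of degree g−1 with h⁰(D) = 1, R and S points of X. Then h⁰(D + R − S) > 0 if and only if S = R, or S lies in the support of D, or R lies in the support of σ(D) (the unique effective divisor with D + σ(D) canonical). -/
import Mathlib


/-- The degree of a divisor (an element of the free abelian group on the points). -/
def divDeg {P : Type*} (D : P →₀ ℤ) : ℤ := D.sum fun _ n => n

lemma divDeg_add {P : Type*} (A B : P →₀ ℤ) : divDeg (A + B) = divDeg A + divDeg B :=
  Finsupp.sum_add_index' (fun _ => rfl) (fun _ _ _ => rfl)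

lemma divDeg_zero {P : Type*} : divDeg (0 : P →₀ ℤ) = 0 := by simp [divDeg]

lemma divDeg_neg {P : Type*} (A : P →₀ ℤ) : divDeg (-A) = -divDeg A := by
  have := divDeg_add (-A) A
  simp [divDeg_zero] at this
  linarith

lemma divDeg_sub {P : Type*} (A B : P →₀ ℤ) : divDeg (A - B) = divDeg A - divDeg B := by
  rw [sub_eq_add_neg, divDeg_add, divDeg_neg]; ring

lemma divDeg_single {P : Type*} (p : P) : divDeg (Finsupp.single p (1:ℤ)) = 1 := by
  simp [divDeg]


/-- Abstract divisor theory of a compact Riemann surface `X` of genus `g`: the points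
of `X`, linear equivalence of divisors, the dimension `h⁰` of global sections of the
line bundle attached to a divisor, and a canonical divisor `K`, subject to the
standard properties (compatibility of linear equivalence with addition and degree,
existence of effective representatives iff `h⁰ > 0`, uniqueness of the effective
representative when `h⁰ = 1`, Riemann–Roch, and `deg K = 2g − 2`). -/
structure CurveDivisorTheory (g : ℕ) where
  Point : Type
  LinEq : (Point →₀ ℤ) → (Point →₀ ℤ) → Prop
  linEq_equiv : Equivalence LinEq
  linEq_add : ∀ A B C, LinEq A B → LinEq (A + C) (B + C)
  degree_congr : ∀ A B, LinEq A B → divDeg A = divDeg B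
  h0 : (Point →₀ ℤ) → ℕ
  h0_congr : ∀ A B, LinEq A B → h0 A = h0 B
  h0_pos_iff : ∀ D, 0 < h0 D ↔ ∃ E, (∀ P, 0 ≤ E P) ∧ LinEq D E
  h0_eq_one_unique : ∀ D E E', h0 D = 1 → (∀ P, 0 ≤ E P) → LinEq D E →
    (∀ P, 0 ≤ E' P) → LinEq D E' → E = E'
  K : Point →₀ ℤ
  riemann_roch : ∀ D, (h0 D : ℤ) - (h0 (K - D) : ℤ) = divDeg D + 1 - g
  degree_K : divDeg K = 2 * (g : ℤ) - 2

/-- Let `X` be a compact Riemann surface of genus `g ≥ 1`, `D` an effective divisor of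
degree `g − 1` with `h⁰(D) = 1`, and `R`, `S` points of `X`. Then `h⁰(D + R − S) > 0`
if and only if `S = R`, or `S` lies in the support of `D`, or `R` lies in the support
of the conjugate divisor `σD` (the unique effective divisor with `D + σD`
canonical). -/
theorem h0_shifted_divisor_pos_iff (g : ℕ) (hg : 1 ≤ g)
    (C : CurveDivisorTheory g) (D σD : C.Point →₀ ℤ)
    (hD : ∀ P, 0 ≤ D P) (hdeg : divDeg D = (g : ℤ) - 1) (hh0 : C.h0 D = 1)
    (hσeff : ∀ P, 0 ≤ σD P) (hσcan : C.LinEq (D + σD) C.K)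
    (hσuniq : ∀ E, (∀ P, 0 ≤ E P) → C.LinEq (D + E) C.K → E = σD)
    (R S : C.Point) :
    0 < C.h0 (D + Finsupp.single R 1 - Finsupp.single S 1) ↔
      S = R ∨ S ∈ D.support ∨ R ∈ σD.support := by
  classical
  obtain ⟨lrefl, lsymm, ltrans⟩ := C.linEq_equiv
  have sap : ∀ (Q P : C.Point), (Finsupp.single Q (1:ℤ)) P = if Q = P then 1 else 0 :=
    fun _ _ => Finsupp.single_apply
  set R1 : C.Point →₀ ℤ := Finsupp.single R 1 with hR1
  set S1 : C.Point →₀ ℤ := Finsupp.single S 1 with hS1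
  set D' : C.Point →₀ ℤ := D + R1 - S1 with hD'
  -- basic degree facts
  have hdegD' : divDeg D' = (g : ℤ) - 1 := by
    rw [hD', divDeg_sub, divDeg_add, divDeg_single, divDeg_single, hdeg]; ring
  have hdegσ : divDeg σD = (g : ℤ) - 1 := by
    have h1 := C.degree_congr _ _ hσcan
    rw [divDeg_add, hdeg, C.degree_K] at h1
    linarith
  -- h0 σD = 1
  have hDKσ : C.LinEq D (C.K - σD) := by
    have := C.linEq_add _ _ (-σD) hσcan
    have e1 : D + σD + -σD = D := by abel
    have e2 : C.K + -σD = C.K - σD := by abel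
    rwa [e1, e2] at this
  have hσ1 : C.h0 σD = 1 := by
    have hrr := C.riemann_roch σD
    have : C.h0 (C.K - σD) = C.h0 D := (C.h0_congr _ _ hDKσ).symm
    rw [this, hh0, hdegσ] at hrr
    omega
  -- RR for D'
  have hrrD' : C.h0 D' = C.h0 (C.K - D') := by
    have hrr := C.riemann_roch D'
    rw [hdegD'] at hrr
    omega
  constructor
  · intro hpos
    by_cases hSR : S = R
    · exact Or.inl hSR
    by_cases hSD : S ∈ D.support
    · exact Or.inr (Or.inl hSD)
    refine Or.inr (Or.inr ?_)
    have hDS : D S = 0 := Finsupp.notMem_support_iff.mp hSD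
    obtain ⟨E, hE, hDE⟩ := (C.h0_pos_iff D').1 hpos
    have hlin1 : C.LinEq (D + R1) (E + S1) := by
      have := C.linEq_add _ _ S1 hDE
      have e1 : D' + S1 = D + R1 := by rw [hD']; abel
      rwa [e1] at this
    -- h0 (K - (D + R1)) > 0
    have hKpos : 0 < C.h0 (C.K - (D + R1)) := by
      by_contra hcon
      have hz : C.h0 (C.K - (D + R1)) = 0 := by omega
      have hrr := C.riemann_roch (D + R1)
      rw [hz, divDeg_add, hdeg, divDeg_single] at hrr
      have h1 : C.h0 (D + R1) = 1 := by push_cast at hrr; omega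
      have heffDR : ∀ P, 0 ≤ (D + R1) P := by
        intro P
        simp only [Finsupp.add_apply, hR1, sap]
        have := hD P
        split_ifs <;> omega
      have heffES : ∀ P, 0 ≤ (E + S1) P := by
        intro P
        simp only [Finsupp.add_apply, hS1, sap]
        have := hE P
        split_ifs <;> omega
      have heq : (D + R1) = (E + S1) :=
        C.h0_eq_one_unique _ _ _ h1 heffDR (lrefl _) heffES hlin1
      have hval := congrArg (fun F => F S) heq
      simp only [Finsupp.add_apply] at hval
      have hR1S : R1 S = 0 := by rw [hR1, sap, if_neg (fun h => hSR h.symm)]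
      have hS1S : S1 S = 1 := by rw [hS1, sap, if_pos rfl]
      rw [hDS, hR1S, hS1S] at hval
      have hES := hE S
      omega
    -- K - (D + R1) ~ σD - R1
    have hlin2 : C.LinEq (σD - R1) (C.K - (D + R1)) := by
      have := C.linEq_add _ _ (-(D + R1)) hσcan
      have e1 : D + σD + -(D + R1) = σD - R1 := by abel
      have e2 : C.K + -(D + R1) = C.K - (D + R1) := by abel
      rwa [e1, e2] at this
    have hσRpos : 0 < C.h0 (σD - R1) := by
      rw [C.h0_congr _ _ hlin2]; exact hKpos
    obtain ⟨E', hE', hE'lin⟩ := (C.h0_pos_iff (σD - R1)).1 hσRpos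
    have hlin3 : C.LinEq σD (E' + R1) := by
      have := C.linEq_add _ _ R1 hE'lin
      have e1 : σD - R1 + R1 = σD := by abel
      rwa [e1] at this
    have heffER : ∀ P, 0 ≤ (E' + R1) P := by
      intro P
      simp only [Finsupp.add_apply, hR1, sap]
      have := hE' P
      split_ifs <;> omega
    have heq : σD = E' + R1 :=
      C.h0_eq_one_unique _ _ _ hσ1 hσeff (lrefl _) heffER hlin3
    have : σD R = E' R + 1 := by
      rw [heq]; simp [hR1, Finsupp.add_apply, Finsupp.single_apply]
    have hER := hE' R
    exact Finsupp.mem_support_iff.mpr (by omega)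
  · rintro (hSR | hSD | hRσ)
    · subst hSR
      have : D' = D := by rw [hD', hR1, hS1]; abel
      rw [this, hh0]; omega
    · have hDS : 1 ≤ D S := by
        have := Finsupp.mem_support_iff.mp hSD
        have := hD S
        omega
      have heff : ∀ P, 0 ≤ D' P := by
        intro P
        have hDP := hD P
        simp only [hD', Finsupp.sub_apply, Finsupp.add_apply, hR1, hS1, sap]
        by_cases hSP : S = P
        · subst hSP; rw [if_pos rfl]; split_ifs <;> omega
        · rw [if_neg hSP]; split_ifs <;> omega
      exact (C.h0_pos_iff D').2 ⟨D', heff, lrefl _⟩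
    · have hσR : 1 ≤ σD R := by
        have := Finsupp.mem_support_iff.mp hRσ
        have := hσeff R
        omega
      have heff : ∀ P, 0 ≤ (σD + S1 - R1) P := by
        intro P
        have hσP := hσeff P
        simp only [Finsupp.sub_apply, Finsupp.add_apply, hR1, hS1, sap]
        by_cases hRP : R = P
        · subst hRP; rw [if_pos rfl]; split_ifs <;> omega
        · rw [if_neg hRP]; split_ifs <;> omega
      have hlin : C.LinEq (σD + S1 - R1) (C.K - D') := by
        have := C.linEq_add _ _ (S1 - R1 - D) hσcan
        have e1 : D + σD + (S1 - R1 - D) = σD + S1 - R1 := by abel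
        have e2 : C.K + (S1 - R1 - D) = C.K - D' := by rw [hD']; abel
        rwa [e1, e2] at this
      have : 0 < C.h0 (C.K - D') := by
        rw [← C.h0_congr _ _ hlin]
        exact (C.h0_pos_iff _).2 ⟨_, heff, lrefl _⟩
      omega
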